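/- arXiv:2312.03274 — 2 statements merged into one kernel-verified Lean document; each statement's English description precedes it below -/
import Mathlib

section
/- Let X be N-by-P, K ≤ min(N,P), and let P_k be arbitrary penalty functions on ℝ^P. If (Ẑ, L̂) minimizes (1/2)||X - Z L^T||_F^2 + Σ_k P_k(l_k) over Z with orthonormal columns and L ∈ ℝ^{P×K}, then L̂ minimizes (1/2) d_*(X^T X, L L^T)^2 + Σ_k P_k(l_k) over L ∈ ℝ^{P×K}, where d_* is the Bures-Wasserstein distance. -/
open Matrix

noncomputable def frobSq {n p : ℕ} (A : Matrix (Fin n) (Fin p) ℝ) : ℝ := ∑ i, ∑ j, (A i j)^2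

open Classical in
/-- The unique positive semidefinite square root of a PSD matrix (junk value `0` otherwise). -/
noncomputable def msqrt {p : ℕ} (M : Matrix (Fin p) (Fin p) ℝ) : Matrix (Fin p) (Fin p) ℝ :=
  if h : M.PosSemidef then
    h.1.eigenvectorUnitary.1 * diagonal ((↑) ∘ (√·) ∘ h.1.eigenvalues) *
      (star h.1.eigenvectorUnitary : Matrix (Fin p) (Fin p) ℝ) else 0

/-- Squared Bures-Wasserstein distance. -/
noncomputable def BWsq {p : ℕ} (A B : Matrix (Fin p) (Fin p) ℝ) : ℝ :=
  A.trace - 2 * (msqrt (msqrt A * B * msqrt A)).trace + B.trace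

/-!
Write `S = √(Mᵀ M)`. The polar decomposition `M = W S` with `Wᵀ W = 1` (possible since `K ≤ N`)
shows that `max {tr (Zᵀ M) | Zᵀ Z = 1} = tr S`, the maximum being attained at `Z = W`. For
`M = X L` and orthonormal `Z` one has `‖X - Z Lᵀ‖² = tr (Xᵀ X) + tr (L Lᵀ) - 2 tr (Zᵀ X L)`, while
`d_*(Xᵀ X, L Lᵀ)² = tr (Xᵀ X) + tr (L Lᵀ) - 2 tr √(Lᵀ Xᵀ X L)`, because with `R = √(Xᵀ X)` the
matrices `R L Lᵀ R = (R L)(R L)ᵀ` and `(R L)ᵀ (R L) = Lᵀ Xᵀ X L` have square roots of equal trace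
(again by polar decomposition). Hence minimizing the PCA criterion over `Z` yields exactly
`(1/2) d_*² + penalty`, and a joint minimizer `(Ẑ, L̂)` makes `L̂` minimize the latter.
-/

open Module

theorem exists_orthonormal_smul_eq_of_pairwise_inner_eq_zero
    {𝕜 E ι : Type*} [RCLike 𝕜] [NormedAddCommGroup E] [InnerProductSpace 𝕜 E]
    [FiniteDimensional 𝕜 E] [Fintype ι] (hcard : Fintype.card ι ≤ finrank 𝕜 E) {v : ι → E}
    (hv : Pairwise fun i j => inner 𝕜 (v i) (v j) = 0) :
    ∃ u : ι → E, Orthonormal 𝕜 u ∧ ∀ i, v i = (‖v i‖ : 𝕜) • u i := by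
  classical
  let w : ι ⊕ Fin (finrank 𝕜 E - Fintype.card ι) → E :=
    Sum.elim (fun i => (‖v i‖⁻¹ : 𝕜) • v i) 0
  let s : Set (ι ⊕ Fin (finrank 𝕜 E - Fintype.card ι)) := Sum.inl '' {i | v i ≠ 0}
  have hw : Orthonormal 𝕜 (s.domRestrict w) := by
    refine ⟨?_, ?_⟩
    · rintro ⟨_, i, hi, rfl⟩
      exact norm_smul_inv_norm hi
    · rintro ⟨_, i, hi, rfl⟩ ⟨_, j, hj, rfl⟩ hij
      have hij : i ≠ j := fun h => hij (by subst h; rfl)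
      simp only [Set.domRestrict_apply, w, Sum.elim_inl, inner_smul_left, inner_smul_right, hv hij,
        mul_zero]
  obtain ⟨b, hb⟩ := hw.exists_orthonormalBasis_extension_of_card_eq (by simp; omega)
  refine ⟨b ∘ Sum.inl, b.orthonormal.comp _ Sum.inl_injective, fun i => ?_⟩
  by_cases hi : v i = 0
  · simp [hi]
  · rw [Function.comp_apply, hb _ ⟨i, hi, rfl⟩]
    simp [w, smul_smul, hi]

namespace Matrix

variable {m : Type*} [Fintype m]

theorem transpose_mul_apply_eq_inner {ι : Type*} (A B : Matrix m ι ℝ) (j j' : ι) :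
    (Aᵀ * B) j j' = inner ℝ (WithLp.toLp 2 (Aᵀ j)) (WithLp.toLp 2 (Bᵀ j')) := by
  simp [EuclideanSpace.inner_toLp_toLp, mul_apply, dotProduct, mul_comm]

theorem exists_eq_mul_diagonal_sqrt_of_transpose_mul_self_eq_diagonal {ι : Type*} [Fintype ι]
    [DecidableEq ι] (hcard : Fintype.card ι ≤ Fintype.card m) {A : Matrix m ι ℝ} {d : ι → ℝ}
    (hA : Aᵀ * A = diagonal d) :
    ∃ C : Matrix m ι ℝ, Cᵀ * C = 1 ∧ A = C * diagonal fun j => √(d j) := by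
  let v : ι → EuclideanSpace ℝ m := fun j => WithLp.toLp 2 (Aᵀ j)
  have hv : Pairwise fun j j' => inner ℝ (v j) (v j') = 0 := fun j j' h => by
    change inner ℝ (v j) (v j') = 0
    rw [← transpose_mul_apply_eq_inner, hA, diagonal_apply_ne _ h]
  obtain ⟨u, hu, hvu⟩ :=
    exists_orthonormal_smul_eq_of_pairwise_inner_eq_zero (by simpa using hcard) hv
  have hnorm : ∀ j, ‖v j‖ = √(d j) := fun j => by
    rw [norm_eq_sqrt_real_inner, ← transpose_mul_apply_eq_inner, hA, diagonal_apply_eq]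
  refine ⟨of fun i j => u j i, ?_, ?_⟩
  · ext j j'
    rw [transpose_mul_apply_eq_inner, one_apply]
    exact orthonormal_iff_ite.mp hu j j'
  · ext i j
    have := congrArg (· i) (hvu j)
    simp_all [v, mul_comm]

theorem posSemidef_transpose_mul_self {n : Type*} [Fintype n] (A : Matrix m n ℝ) :
    (Aᵀ * A).PosSemidef := by
  simpa using posSemidef_conjTranspose_mul_self A

theorem two_mul_trace_transpose_mul_le {n : Type*} [Fintype n] (A B : Matrix m n ℝ) :
    2 * (Aᵀ * B).trace ≤ (Aᵀ * A).trace + (Bᵀ * B).trace := by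
  have h := (posSemidef_transpose_mul_self (A - B)).trace_nonneg
  have hBA : (Bᵀ * A).trace = (Aᵀ * B).trace := by
    rw [← trace_transpose, transpose_mul, transpose_transpose]
  rw [transpose_sub, Matrix.sub_mul, Matrix.mul_sub, Matrix.mul_sub, trace_sub, trace_sub,
    trace_sub, hBA] at h
  linarith

end Matrix

section msqrt

variable {p : ℕ} {M S : Matrix (Fin p) (Fin p) ℝ}

open scoped MatrixOrder in
theorem msqrt_eq_cfcSqrt (hM : M.PosSemidef) : msqrt M = CFC.sqrt M := by
  rw [msqrt, dif_pos hM, CFC.sqrt_eq_cfc, cfc_nnreal_eq_real _ M hM.nonneg, hM.1.cfc_eq,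
    IsHermitian.cfc, Unitary.conjStarAlgAut_apply]
  congr 3
  funext i
  simp [hM.eigenvalues_nonneg i]

open scoped MatrixOrder in
theorem posSemidef_msqrt (hM : M.PosSemidef) : (msqrt M).PosSemidef := by
  rw [msqrt_eq_cfcSqrt hM]
  exact nonneg_iff_posSemidef.mp (CFC.sqrt_nonneg M)

open scoped MatrixOrder in
theorem msqrt_mul_self (hM : M.PosSemidef) : msqrt M * msqrt M = M := by
  rw [msqrt_eq_cfcSqrt hM]
  exact CFC.sqrt_mul_sqrt_self M hM.nonneg

open scoped MatrixOrder in
theorem msqrt_eq_of_mul_self_eq (hS : S.PosSemidef) (h : S * S = M) : msqrt M = S := by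
  have hSt : Sᵀ = S := hS.1
  have hM : M.PosSemidef := by
    simpa [← h, hSt] using posSemidef_conjTranspose_mul_self S
  rw [msqrt_eq_cfcSqrt hM]
  exact CFC.sqrt_unique h hS.nonneg

theorem transpose_msqrt (hM : M.PosSemidef) : (msqrt M)ᵀ = msqrt M :=
  (posSemidef_msqrt hM).1

end msqrt

section polar

variable {m : Type*} [Fintype m] {k : ℕ}

theorem exists_transpose_mul_self_eq_one_and_eq_mul_msqrt (hk : k ≤ Fintype.card m)
    (M : Matrix m (Fin k) ℝ) : ∃ W : Matrix m (Fin k) ℝ, Wᵀ * W = 1 ∧ M = W * msqrt (Mᵀ * M) := by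
  have hG := posSemidef_transpose_mul_self M
  let U : Matrix (Fin k) (Fin k) ℝ := hG.1.eigenvectorUnitary
  let d := hG.1.eigenvalues
  have hUU : Uᵀ * U = 1 := by
    simpa [U, star_eq_conjTranspose] using Unitary.coe_star_mul_self hG.1.eigenvectorUnitary
  have hUU' : U * Uᵀ = 1 := by
    simpa [U, star_eq_conjTranspose] using Unitary.coe_mul_star_self hG.1.eigenvectorUnitary
  have hsqrt : msqrt (Mᵀ * M) = U * diagonal (fun j => √(d j)) * Uᵀ := by
    simp [msqrt, dif_pos hG, U, d, star_eq_conjTranspose]; rfl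
  have hdiag : (M * U)ᵀ * (M * U) = diagonal d := by
    have h := hG.1.conjStarAlgAut_star_eigenvectorUnitary
    simp only [Unitary.conjStarAlgAut_star_apply, star_eq_conjTranspose,
      conjTranspose_eq_transpose_of_trivial, RCLike.ofReal_real_eq_id] at h
    simpa [transpose_mul, Matrix.mul_assoc] using h
  obtain ⟨C, hC, hMU⟩ :=
    exists_eq_mul_diagonal_sqrt_of_transpose_mul_self_eq_diagonal (by simpa using hk) hdiag
  refine ⟨C * Uᵀ, ?_, ?_⟩
  · rw [transpose_mul, transpose_transpose, Matrix.mul_assoc, ← Matrix.mul_assoc Cᵀ, hC,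
      Matrix.one_mul, hUU']
  · calc M = M * U * Uᵀ := by rw [Matrix.mul_assoc, hUU', Matrix.mul_one]
      _ = C * Uᵀ * (U * diagonal (fun j => √(d j)) * Uᵀ) := by
        rw [hMU]; simp only [Matrix.mul_assoc, ← Matrix.mul_assoc Uᵀ U, hUU, Matrix.one_mul]
      _ = C * Uᵀ * msqrt (Mᵀ * M) := by rw [hsqrt]

theorem trace_transpose_mul_le_trace_msqrt (hk : k ≤ Fintype.card m) (M Z : Matrix m (Fin k) ℝ)
    (hZ : Zᵀ * Z = 1) : (Zᵀ * M).trace ≤ (msqrt (Mᵀ * M)).trace := by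
  obtain ⟨W, hW, hM⟩ := exists_transpose_mul_self_eq_one_and_eq_mul_msqrt hk M
  have hS := posSemidef_msqrt (posSemidef_transpose_mul_self M)
  -- With `S = T * T`, `tr (Zᵀ * W * S)` pairs `Z * T` with `W * T`, both of Gram matrix `S`.
  set T := msqrt (msqrt (Mᵀ * M))
  have hTT : T * T = msqrt (Mᵀ * M) := msqrt_mul_self hS
  have hTt : Tᵀ = T := transpose_msqrt hS
  have hgram : ∀ V : Matrix m (Fin k) ℝ, Vᵀ * V = 1 → (V * T)ᵀ * (V * T) = msqrt (Mᵀ * M) :=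
    fun V hV => by
      rw [transpose_mul, hTt, Matrix.mul_assoc, ← Matrix.mul_assoc Vᵀ, hV, Matrix.one_mul, hTT]
  have hpair : (Zᵀ * M).trace = ((Z * T)ᵀ * (W * T)).trace := by
    calc (Zᵀ * M).trace = (Zᵀ * W * T * T).trace := by
          rw [Matrix.mul_assoc _ T, hTT, Matrix.mul_assoc, ← hM]
      _ = (T * (Zᵀ * W * T)).trace := trace_mul_comm _ _
      _ = ((Z * T)ᵀ * (W * T)).trace := by
          rw [transpose_mul, hTt]; simp only [Matrix.mul_assoc]
  have h := two_mul_trace_transpose_mul_le (Z * T) (W * T)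
  rw [hgram Z hZ, hgram W hW, ← hpair] at h
  linarith

theorem exists_trace_transpose_mul_eq_trace_msqrt (hk : k ≤ Fintype.card m)
    (M : Matrix m (Fin k) ℝ) :
    ∃ Z : Matrix m (Fin k) ℝ, Zᵀ * Z = 1 ∧ (Zᵀ * M).trace = (msqrt (Mᵀ * M)).trace := by
  obtain ⟨W, hW, hM⟩ := exists_transpose_mul_self_eq_one_and_eq_mul_msqrt hk M
  refine ⟨W, hW, ?_⟩
  conv_lhs => rw [hM, ← Matrix.mul_assoc, hW, Matrix.one_mul]

end polar

theorem trace_msqrt_mul_transpose_self {p k : ℕ} (hk : k ≤ p) (N : Matrix (Fin p) (Fin k) ℝ) :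
    (msqrt (N * Nᵀ)).trace = (msqrt (Nᵀ * N)).trace := by
  obtain ⟨W, hW, hN⟩ := exists_transpose_mul_self_eq_one_and_eq_mul_msqrt (by simpa using hk) N
  set S := msqrt (Nᵀ * N)
  have hS := posSemidef_msqrt (posSemidef_transpose_mul_self N)
  have hSt : Sᵀ = S := transpose_msqrt (posSemidef_transpose_mul_self N)
  have hsq : (W * S * Wᵀ) * (W * S * Wᵀ) = N * Nᵀ := by
    conv_rhs => rw [hN, transpose_mul, hSt]
    simp only [Matrix.mul_assoc, ← Matrix.mul_assoc Wᵀ W, hW, Matrix.one_mul]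
  rw [msqrt_eq_of_mul_self_eq (by simpa using hS.mul_mul_conjTranspose_same W) hsq,
    trace_mul_cycle, hW, Matrix.one_mul]

theorem frobSq_eq_trace {n p : ℕ} (A : Matrix (Fin n) (Fin p) ℝ) : frobSq A = (Aᵀ * A).trace := by
  rw [frobSq, Finset.sum_comm]
  simp [trace, mul_apply, sq]

theorem frobSq_sub_mul_transpose {N P K : ℕ} (X : Matrix (Fin N) (Fin P) ℝ)
    {Z : Matrix (Fin N) (Fin K) ℝ} (hZ : Zᵀ * Z = 1) (L : Matrix (Fin P) (Fin K) ℝ) :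
    frobSq (X - Z * Lᵀ) = (Xᵀ * X).trace + (L * Lᵀ).trace - 2 * (Zᵀ * (X * L)).trace := by
  have hZL : (Z * Lᵀ)ᵀ * (Z * Lᵀ) = L * Lᵀ := by
    rw [transpose_mul, transpose_transpose, Matrix.mul_assoc, ← Matrix.mul_assoc Zᵀ, hZ,
      Matrix.one_mul]
  have hcross : ((Z * Lᵀ)ᵀ * X).trace = (Zᵀ * (X * L)).trace := by
    rw [transpose_mul, transpose_transpose, Matrix.mul_assoc, trace_mul_comm, Matrix.mul_assoc]
  have hcross' : (Xᵀ * (Z * Lᵀ)).trace = (Zᵀ * (X * L)).trace := by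
    rw [← trace_transpose, transpose_mul, transpose_transpose, hcross]
  rw [frobSq_eq_trace, transpose_sub, Matrix.sub_mul, Matrix.mul_sub, Matrix.mul_sub,
    trace_sub, trace_sub, trace_sub, hZL, hcross, hcross']
  ring

theorem BWsq_transpose_mul_self_mul_transpose_self {N P K : ℕ} (hKP : K ≤ P)
    (X : Matrix (Fin N) (Fin P) ℝ) (L : Matrix (Fin P) (Fin K) ℝ) :
    BWsq (Xᵀ * X) (L * Lᵀ) =
      (Xᵀ * X).trace + (L * Lᵀ).trace - 2 * (msqrt ((X * L)ᵀ * (X * L))).trace := by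
  have hA := posSemidef_transpose_mul_self X
  set R := msqrt (Xᵀ * X)
  have hRt : Rᵀ = R := transpose_msqrt hA
  have hmid : R * (L * Lᵀ) * R = (R * L) * (R * L)ᵀ := by
    rw [transpose_mul, hRt]
    simp only [Matrix.mul_assoc]
  have hgram : (R * L)ᵀ * (R * L) = (X * L)ᵀ * (X * L) := by
    rw [transpose_mul, hRt, transpose_mul, Matrix.mul_assoc,
      ← Matrix.mul_assoc R, msqrt_mul_self hA]
    simp only [Matrix.mul_assoc]
  rw [BWsq, hmid, trace_msqrt_mul_transpose_self hKP, hgram]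
  ring

theorem BWsq_le_frobSq_sub_mul_transpose {N P K : ℕ} (hKN : K ≤ N) (hKP : K ≤ P)
    (X : Matrix (Fin N) (Fin P) ℝ) {Z : Matrix (Fin N) (Fin K) ℝ} (hZ : Zᵀ * Z = 1)
    (L : Matrix (Fin P) (Fin K) ℝ) : BWsq (Xᵀ * X) (L * Lᵀ) ≤ frobSq (X - Z * Lᵀ) := by
  rw [BWsq_transpose_mul_self_mul_transpose_self hKP, frobSq_sub_mul_transpose X hZ]
  linarith [trace_transpose_mul_le_trace_msqrt (by simpa using hKN) (X * L) Z hZ]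

theorem exists_frobSq_sub_mul_transpose_eq_BWsq {N P K : ℕ} (hKN : K ≤ N) (hKP : K ≤ P)
    (X : Matrix (Fin N) (Fin P) ℝ) (L : Matrix (Fin P) (Fin K) ℝ) :
    ∃ Z : Matrix (Fin N) (Fin K) ℝ, Zᵀ * Z = 1 ∧
      frobSq (X - Z * Lᵀ) = BWsq (Xᵀ * X) (L * Lᵀ) := by
  obtain ⟨Z, hZ, htr⟩ := exists_trace_transpose_mul_eq_trace_msqrt (by simpa using hKN) (X * L)
  refine ⟨Z, hZ, ?_⟩
  rw [BWsq_transpose_mul_self_mul_transpose_self hKP, frobSq_sub_mul_transpose X hZ, htr]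

/-- If `(Ẑ, L̂)` minimizes the penalized PCA criterion, then `L̂` minimizes the
penalized covariance decomposition criterion. -/
theorem stmt8 {N P K : ℕ} (hKN : K ≤ N) (hKP : K ≤ P)
    (X : Matrix (Fin N) (Fin P) ℝ)
    (pen : Fin K → (Fin P → ℝ) → ℝ)
    (Zhat : Matrix (Fin N) (Fin K) ℝ) (Lhat : Matrix (Fin P) (Fin K) ℝ)
    (hZhat : Zhat.transpose * Zhat = 1)
    (hmin : ∀ (Z : Matrix (Fin N) (Fin K) ℝ) (L : Matrix (Fin P) (Fin K) ℝ),
      Z.transpose * Z = 1 →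
      (1/2) * frobSq (X - Zhat * Lhat.transpose) + ∑ k, pen k (fun p => Lhat p k)
        ≤ (1/2) * frobSq (X - Z * L.transpose) + ∑ k, pen k (fun p => L p k)) :
    ∀ L : Matrix (Fin P) (Fin K) ℝ,
      (1/2) * BWsq (X.transpose * X) (Lhat * Lhat.transpose) + ∑ k, pen k (fun p => Lhat p k)
        ≤ (1/2) * BWsq (X.transpose * X) (L * L.transpose) + ∑ k, pen k (fun p => L p k) := by
  intro L
  obtain ⟨Z, hZ, hZL⟩ := exists_frobSq_sub_mul_transpose_eq_BWsq hKN hKP X L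
  linarith [BWsq_le_frobSq_sub_mul_transpose hKN hKP X hZhat Lhat, hmin Z L hZ]
end

section
/- Given diagonal positive precision matrix T = diag(τ_1,...,τ_P) with all τ_p > 0, X an N-by-P real matrix and L a P-by-K real matrix, the minimum over Z with Z^T Z = I_K of Σ_{n,p} τ_p (x_{n,p} - (Z L^T)_{n,p})^2 is achieved by Z = Polar.U(X T L). -/
/-!
For `Z` with orthonormal columns the weighted loss equals a constant minus
`2 * trace (Zᵀ * X T L)`, so it suffices to maximize that trace. Writing `X T L = U D Vᵀ`,
the trace is `∑ i, d i * W i i` with `W = (Z V)ᵀ U`, and every entry of a product of two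
matrices with orthonormal columns is at most `1`; hence the trace is at most `∑ i, d i`,
which `Z = U Vᵀ` attains.
-/

open Matrix

variable {m n k R : Type*} [Fintype m]

section Loss

variable [Fintype n] [DecidableEq n] [CommRing R]

theorem Matrix.trace_mul_diagonal_mul_transpose (τ : n → R) (A B : Matrix m n R) :
    trace (A * diagonal τ * Bᵀ) = ∑ i, ∑ j, τ j * (A i j * B i j) := by
  simp only [trace, diag, mul_apply, transpose_apply, diagonal_apply, mul_ite, mul_zero,
    Finset.sum_ite_eq', Finset.mem_univ, if_true]
  refine Finset.sum_congr rfl fun i _ => Finset.sum_congr rfl fun j _ => by ring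

theorem weighted_sq_sub_eq_trace [Fintype k] [DecidableEq k] (τ : n → R) (X : Matrix m n R)
    (L : Matrix n k R) {Z : Matrix m k R} (hZ : Zᵀ * Z = 1) :
    ∑ i, ∑ j, τ j * (X i j - (Z * Lᵀ) i j) ^ 2
      = ∑ i, ∑ j, τ j * X i j ^ 2 + trace (Lᵀ * diagonal τ * L)
        - 2 * trace (Zᵀ * (X * diagonal τ * L)) := by
  have hquad : trace (Z * Lᵀ * diagonal τ * (Z * Lᵀ)ᵀ) = trace (Lᵀ * diagonal τ * L) := by
    rw [transpose_mul, transpose_transpose,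
      show Z * Lᵀ * diagonal τ * (L * Zᵀ) = Z * (Lᵀ * diagonal τ * L * Zᵀ) by
        simp only [Matrix.mul_assoc],
      trace_mul_comm, Matrix.mul_assoc, hZ, Matrix.mul_one]
  have hcross : trace (X * diagonal τ * (Z * Lᵀ)ᵀ) = trace (Zᵀ * (X * diagonal τ * L)) := by
    rw [transpose_mul, transpose_transpose, ← Matrix.mul_assoc, trace_mul_comm]
  rw [← hquad, ← hcross]
  simp only [trace_mul_diagonal_mul_transpose, Finset.mul_sum, ← Finset.sum_add_distrib,
    ← Finset.sum_sub_distrib]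
  refine Finset.sum_congr rfl fun i _ => Finset.sum_congr rfl fun j _ => by ring

end Loss

section Orthonormal

variable [DecidableEq k]

theorem Matrix.transpose_mul_apply_le_one {A B : Matrix m k ℝ} (hA : Aᵀ * A = 1)
    (hB : Bᵀ * B = 1) (i j : k) : (Aᵀ * B) i j ≤ 1 := by
  have hcol : ∀ {C : Matrix m k ℝ}, Cᵀ * C = 1 → ∀ l, ∑ r, C r l ^ 2 = 1 := fun hC l => by
    simpa [mul_apply, sq] using congrFun (congrFun hC l) l
  calc (Aᵀ * B) i j = ∑ r, A r i * B r j := by simp [mul_apply]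
    _ ≤ ∑ r, (A r i ^ 2 + B r j ^ 2) / 2 :=
        Finset.sum_le_sum fun r _ => by nlinarith [sq_nonneg (A r i - B r j)]
    _ = 1 := by rw [← Finset.sum_div, Finset.sum_add_distrib, hcol hA, hcol hB]; norm_num

variable [Fintype k]

theorem Matrix.transpose_mul_self_eq_one_of_mul_transpose {U : Matrix m k ℝ} {V : Matrix k k ℝ}
    (hU : Uᵀ * U = 1) (hV : V * Vᵀ = 1) : (U * Vᵀ)ᵀ * (U * Vᵀ) = 1 := by
  rw [transpose_mul, transpose_transpose, Matrix.mul_assoc, ← Matrix.mul_assoc Uᵀ, hU,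
    Matrix.one_mul, hV]

theorem trace_transpose_mul_svd_le {U Z : Matrix m k ℝ} {V : Matrix k k ℝ} {d : k → ℝ}
    (hU : Uᵀ * U = 1) (hZ : Zᵀ * Z = 1) (hV : Vᵀ * V = 1) (hd : ∀ i, 0 ≤ d i) :
    trace (Zᵀ * (U * diagonal d * Vᵀ)) ≤ ∑ i, d i := by
  have hZV : (Z * V)ᵀ * (Z * V) = 1 := by
    rw [transpose_mul, Matrix.mul_assoc, ← Matrix.mul_assoc Zᵀ, hZ, Matrix.one_mul, hV]
  calc trace (Zᵀ * (U * diagonal d * Vᵀ)) = trace ((Z * V)ᵀ * U * diagonal d) := by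
        rw [transpose_mul, ← trace_mul_cycle', ← trace_mul_cycle']
        simp only [Matrix.mul_assoc]
    _ = ∑ i, ((Z * V)ᵀ * U) i i * d i := by simp [trace, mul_diagonal]
    _ ≤ ∑ i, d i := Finset.sum_le_sum fun i _ =>
        mul_le_of_le_one_left (hd i) (transpose_mul_apply_le_one hZV hU i i)

theorem trace_polar_mul_svd {U : Matrix m k ℝ} {V : Matrix k k ℝ} (d : k → ℝ)
    (hU : Uᵀ * U = 1) (hV : Vᵀ * V = 1) :
    trace ((U * Vᵀ)ᵀ * (U * diagonal d * Vᵀ)) = ∑ i, d i := by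
  rw [transpose_mul, transpose_transpose, ← trace_mul_cycle', ← trace_mul_cycle']
  simp only [Matrix.mul_assoc]
  rw [← Matrix.mul_assoc Uᵀ, hU, Matrix.one_mul, ← Matrix.mul_assoc, hV, Matrix.one_mul,
    trace_diagonal]

end Orthonormal

theorem stmt15_general {N P K : ℕ}
    (tau : Fin P → ℝ)
    (X : Matrix (Fin N) (Fin P) ℝ) (L : Matrix (Fin P) (Fin K) ℝ)
    (U : Matrix (Fin N) (Fin K) ℝ) (V : Matrix (Fin K) (Fin K) ℝ) (d : Fin K → ℝ)
    (hU : U.transpose * U = 1)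
    (hV : V.transpose * V = 1) (hV' : V * V.transpose = 1)
    (hd : ∀ i, 0 ≤ d i)
    (hSVD : X * Matrix.diagonal tau * L = U * Matrix.diagonal d * V.transpose) :
    ((U * V.transpose).transpose * (U * V.transpose) = 1) ∧
    ∀ Z : Matrix (Fin N) (Fin K) ℝ, Z.transpose * Z = 1 →
      ∑ n, ∑ p, tau p * (X n p - ((U * V.transpose) * L.transpose) n p)^2
        ≤ ∑ n, ∑ p, tau p * (X n p - (Z * L.transpose) n p)^2 := by
  have hpolar := transpose_mul_self_eq_one_of_mul_transpose hU hV'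
  refine ⟨hpolar, fun Z hZ => ?_⟩
  rw [weighted_sq_sub_eq_trace tau X L hZ, weighted_sq_sub_eq_trace tau X L hpolar, hSVD,
    trace_polar_mul_svd d hU hV]
  linarith [trace_transpose_mul_svd_le hU hZ hV hd]

/-- Heteroskedastic reduced-rank Procrustes: with `T = diagonal τ`, `τ_p > 0`, and
`X T L = U diagonal d Vᵀ` an SVD, the matrix `Z = U Vᵀ` has orthonormal columns and
minimizes the weighted loss `Σ_{n,p} τ_p (x_{n,p} - (Z Lᵀ)_{n,p})²` over all such `Z`. -/
theorem stmt15 {N P K : ℕ}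
    (tau : Fin P → ℝ) (htau : ∀ p, 0 < tau p)
    (X : Matrix (Fin N) (Fin P) ℝ) (L : Matrix (Fin P) (Fin K) ℝ)
    (U : Matrix (Fin N) (Fin K) ℝ) (V : Matrix (Fin K) (Fin K) ℝ) (d : Fin K → ℝ)
    (hU : U.transpose * U = 1)
    (hV : V.transpose * V = 1) (hV' : V * V.transpose = 1)
    (hd : ∀ i, 0 ≤ d i)
    (hSVD : X * Matrix.diagonal tau * L = U * Matrix.diagonal d * V.transpose) :
    ((U * V.transpose).transpose * (U * V.transpose) = 1) ∧
    ∀ Z : Matrix (Fin N) (Fin K) ℝ, Z.transpose * Z = 1 →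
      ∑ n, ∑ p, tau p * (X n p - ((U * V.transpose) * L.transpose) n p)^2
        ≤ ∑ n, ∑ p, tau p * (X n p - (Z * L.transpose) n p)^2 :=
  stmt15_general tau X L U V d hU hV hV' hd hSVD
end
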